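/- For every matrix Δ in the cone C(r) and every integer j ≥ 1, the j-th largest singular value of Δ satisfies σ_j(Δ) ≤ 4·√(2r)·‖Δ‖_F / j. -/

import Mathlib

open MeasureTheory ProbabilityTheory Matrix

/-- The (unordered) singular values of a real `m × n` matrix, indexed by `Fin n`:
the square roots of the eigenvalues of `Aᵀ * A`. -/
noncomputable def singVals {m n : ℕ} (A : Matrix (Fin m) (Fin n) ℝ) : Fin n → ℝ :=
  fun i => Real.sqrt ((show (Aᵀ * A).IsHermitian by
    simpa [Matrix.conjTranspose_eq_transpose_of_trivial] using
      Matrix.isHermitian_conjTranspose_mul_self A).eigenvalues i)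

/-- The nuclear (trace) norm: the sum of the singular values. -/
noncomputable def nucNorm {m n : ℕ} (A : Matrix (Fin m) (Fin n) ℝ) : ℝ := ∑ i, singVals A i

/-- The Frobenius norm. -/
noncomputable def frobNorm {m n : ℕ} (A : Matrix (Fin m) (Fin n) ℝ) : ℝ :=
  Real.sqrt (∑ i, ∑ j, (A i j) ^ 2)

/-- The operator norm: the largest singular value. -/
noncomputable def opNorm {m n : ℕ} (A : Matrix (Fin m) (Fin n) ℝ) : ℝ := ⨆ i, singVals A i

/-- `Π(Δ) = (I - U Uᵀ) Δ (I - V Vᵀ)`. -/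
def projPerp {d T r : ℕ} (U : Matrix (Fin d) (Fin r) ℝ) (V : Matrix (Fin T) (Fin r) ℝ)
    (Δ : Matrix (Fin d) (Fin T) ℝ) : Matrix (Fin d) (Fin T) ℝ :=
  (1 - U * Uᵀ) * Δ * (1 - V * Vᵀ)

/-- The cone `C(r) = {Δ : ‖Π(Δ)‖_* ≤ 3 ‖Δ - Π(Δ)‖_*}`. -/
noncomputable def coneC {d T r : ℕ} (U : Matrix (Fin d) (Fin r) ℝ)
    (V : Matrix (Fin T) (Fin r) ℝ) : Set (Matrix (Fin d) (Fin T) ℝ) :=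
  {Δ | nucNorm (projPerp U V Δ) ≤ 3 * nucNorm (Δ - projPerp U V Δ)}

/-- The block-diagonal quadratic form `∑ t, Δ_tᵀ S_t Δ_t`. -/
noncomputable def quadSum {d T : ℕ} (S : Fin T → Matrix (Fin d) (Fin d) ℝ)
    (Δ : Matrix (Fin d) (Fin T) ℝ) : ℝ :=
  ∑ t, (fun i => Δ i t) ⬝ᵥ (S t).mulVec (fun i => Δ i t)

/-- The restricted strong convexity condition for the block-diagonal matrix with blocks `S t`,
on the cone `cone`, with constant `κ`. -/
def RSC {d T : ℕ} (S : Fin T → Matrix (Fin d) (Fin d) ℝ)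
    (cone : Set (Matrix (Fin d) (Fin T) ℝ)) (κ : ℝ) : Prop :=
  ∀ Δ ∈ cone, 2 * κ * (frobNorm Δ) ^ 2 ≤ quadSum S Δ

/-- The cone-restricted operator norm of the block-diagonal matrix with blocks `S t`. -/
noncomputable def coneOpNorm {d T : ℕ} (S : Fin T → Matrix (Fin d) (Fin d) ℝ)
    (cone : Set (Matrix (Fin d) (Fin T) ℝ)) : ℝ :=
  sSup {c | ∃ Δ ∈ cone, frobNorm Δ = 1 ∧ c = |quadSum S Δ|}

/-- The `j`-th largest singular value of `A` (with `j` 1-indexed); `0` for `j` out of range. -/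
noncomputable def svDesc {m n : ℕ} (A : Matrix (Fin m) (Fin n) ℝ) (j : ℕ) : ℝ :=
  if h : 1 ≤ j ∧ j ≤ n then singVals A ((Tuple.sort (singVals A)) ⟨n - j, by omega⟩) else 0

/-! For `Δ` in the cone, the triangle inequality for the nuclear norm gives
`‖Δ‖_* ≤ 4 ‖Δ - Π(Δ)‖_*`. The matrix `Δ - Π(Δ) = P_U Δ + (I - P_U) Δ P_V` has rank at most `2r`
and is Frobenius-orthogonal to `Π(Δ)`, so `‖Δ - Π(Δ)‖_* ≤ √(2r) ‖Δ - Π(Δ)‖_F ≤ √(2r) ‖Δ‖_F`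
(Cauchy–Schwarz over the nonzero singular values). Finally `j σ_j(Δ) ≤ ‖Δ‖_*`, since the `j`
largest singular values are all at least `σ_j(Δ)`.

The triangle inequality for `‖·‖_*` is trace duality: `∑ i, ⟪Q (b i), T (b i)⟫ = tr (Q† T)` does
not depend on the orthonormal basis `b`, it is at most `∑ i, ‖T (b i)‖` when `Q` is a contraction,
and it equals `‖T‖_*` when `b` consists of right singular vectors of `T` and `Q` is its polar
factor. -/

open scoped InnerProductSpace

section TraceDuality

variable {ι κ E F : Type*} [Fintype ι] [Fintype κ]
  [NormedAddCommGroup E] [InnerProductSpace ℝ E] [NormedAddCommGroup F] [InnerProductSpace ℝ F]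

lemma norm_sum_sq_of_pairwise_inner_eq_zero (v : ι → F)
    (hv : Pairwise fun i j => ⟪v i, v j⟫_ℝ = 0) : ‖∑ i, v i‖ ^ 2 = ∑ i, ‖v i‖ ^ 2 := by
  classical
  rw [← real_inner_self_eq_norm_sq, sum_inner]
  refine Finset.sum_congr rfl fun i _ => ?_
  rw [inner_sum, Finset.sum_eq_single i (fun j _ hji => hv hji.symm) (by simp),
    real_inner_self_eq_norm_sq]

lemma exists_contraction_inner_eq_norm (T : E →ₗ[ℝ] F) (b : OrthonormalBasis ι ℝ E)
    (hb : Pairwise fun i j => ⟪T (b i), T (b j)⟫_ℝ = 0) :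
    ∃ Q : E →ₗ[ℝ] F, (∀ x, ‖Q x‖ ≤ ‖x‖) ∧ ∀ i, ⟪Q (b i), T (b i)⟫_ℝ = ‖T (b i)‖ := by
  classical
  set u : ι → F := fun i => ‖T (b i)‖⁻¹ • T (b i) with hu
  have hu_le : ∀ i, ‖u i‖ ≤ 1 := fun i => by
    by_cases h : T (b i) = 0
    · simp [hu, h]
    · simp [hu, norm_smul, inv_mul_cancel₀ (norm_ne_zero_iff.mpr h)]
  have hQ : ∀ x, (∑ i, (innerₛₗ ℝ (b i)).smulRight (u i)) x = ∑ i, ⟪b i, x⟫_ℝ • u i :=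
    fun x => by simp
  refine ⟨∑ i, (innerₛₗ ℝ (b i)).smulRight (u i), fun x => ?_, fun i => ?_⟩
  · rw [hQ]
    have horth : Pairwise fun i j => ⟪⟪b i, x⟫_ℝ • u i, ⟪b j, x⟫_ℝ • u j⟫_ℝ = 0 :=
      fun i j hij => by simp [hu, real_inner_smul_left, real_inner_smul_right, hb hij]
    refine pow_le_pow_iff_left₀ (norm_nonneg _) (norm_nonneg _) two_ne_zero |>.mp ?_
    rw [norm_sum_sq_of_pairwise_inner_eq_zero _ horth, ← b.sum_sq_inner_right x]
    refine Finset.sum_le_sum fun i _ => ?_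
    rw [norm_smul, mul_pow, Real.norm_eq_abs, sq_abs]
    exact mul_le_of_le_one_right (sq_nonneg _) (pow_le_one₀ (norm_nonneg _) (hu_le i))
  · rw [hQ, Finset.sum_eq_single i (fun j _ hji => by simp [b.orthonormal.2 hji]) (by simp)]
    rw [real_inner_self_eq_norm_sq, b.orthonormal.1 i, one_pow, one_smul, hu,
      real_inner_smul_left, real_inner_self_eq_norm_sq, sq, ← mul_assoc, inv_mul_mul_self]

variable [FiniteDimensional ℝ E] [FiniteDimensional ℝ F]

lemma sum_inner_apply_eq_trace (Q T : E →ₗ[ℝ] F) (b : OrthonormalBasis ι ℝ E) :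
    ∑ i, ⟪Q (b i), T (b i)⟫_ℝ = LinearMap.trace ℝ E (Q.adjoint ∘ₗ T) := by
  simp [LinearMap.trace_eq_sum_inner _ b, LinearMap.adjoint_inner_right]

lemma sum_inner_le_sum_norm {Q : E →ₗ[ℝ] F} (hQ : ∀ x, ‖Q x‖ ≤ ‖x‖) (T : E →ₗ[ℝ] F)
    (b : OrthonormalBasis ι ℝ E) (c : OrthonormalBasis κ ℝ E) :
    ∑ i, ⟪Q (b i), T (b i)⟫_ℝ ≤ ∑ k, ‖T (c k)‖ := by
  rw [sum_inner_apply_eq_trace, ← sum_inner_apply_eq_trace _ _ c]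
  refine Finset.sum_le_sum fun k _ => ?_
  calc ⟪Q (c k), T (c k)⟫_ℝ ≤ ‖Q (c k)‖ * ‖T (c k)‖ := real_inner_le_norm _ _
    _ ≤ 1 * ‖T (c k)‖ := by
        gcongr
        simpa [c.orthonormal.1 k] using hQ (c k)
    _ = ‖T (c k)‖ := one_mul _

lemma sum_norm_add_le_of_pairwise_inner_eq_zero {κ' : Type*} [Fintype κ'] (T₁ T₂ : E →ₗ[ℝ] F)
    (b : OrthonormalBasis ι ℝ E)
    (hb : Pairwise fun i j => ⟪(T₁ + T₂) (b i), (T₁ + T₂) (b j)⟫_ℝ = 0)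
    (c₁ : OrthonormalBasis κ ℝ E) (c₂ : OrthonormalBasis κ' ℝ E) :
    ∑ i, ‖(T₁ + T₂) (b i)‖ ≤ ∑ k, ‖T₁ (c₁ k)‖ + ∑ k, ‖T₂ (c₂ k)‖ := by
  obtain ⟨Q, hQ, hQb⟩ := exists_contraction_inner_eq_norm _ b hb
  calc ∑ i, ‖(T₁ + T₂) (b i)‖ = ∑ i, ⟪Q (b i), T₁ (b i)⟫_ℝ + ∑ i, ⟪Q (b i), T₂ (b i)⟫_ℝ := by
        simp_rw [← hQb, LinearMap.add_apply, inner_add_right, Finset.sum_add_distrib]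
    _ ≤ _ := add_le_add (sum_inner_le_sum_norm hQ _ b c₁) (sum_inner_le_sum_norm hQ _ b c₂)

end TraceDuality

section SingularValues

variable {m n : ℕ}

lemma isHermitian_transpose_mul_self (M : Matrix (Fin m) (Fin n) ℝ) : (Mᵀ * M).IsHermitian := by
  simpa [conjTranspose_eq_transpose_of_trivial] using isHermitian_conjTranspose_mul_self M

noncomputable def rightSingularBasis (M : Matrix (Fin m) (Fin n) ℝ) :
    OrthonormalBasis (Fin n) ℝ (EuclideanSpace ℝ (Fin n)) :=
  (isHermitian_transpose_mul_self M).eigenvectorBasis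

lemma eigenvalues_transpose_mul_self_nonneg (M : Matrix (Fin m) (Fin n) ℝ) (i : Fin n) :
    0 ≤ (isHermitian_transpose_mul_self M).eigenvalues i :=
  eigenvalues_conjTranspose_mul_self_nonneg M i

lemma singVals_sq (M : Matrix (Fin m) (Fin n) ℝ) (i : Fin n) :
    singVals M i ^ 2 = (isHermitian_transpose_mul_self M).eigenvalues i :=
  Real.sq_sqrt (eigenvalues_transpose_mul_self_nonneg M i)

lemma inner_toEuclideanLin_rightSingularBasis (M : Matrix (Fin m) (Fin n) ℝ) (i j : Fin n) :
    ⟪toEuclideanLin M (rightSingularBasis M i), toEuclideanLin M (rightSingularBasis M j)⟫_ℝ =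
      (isHermitian_transpose_mul_self M).eigenvalues j *
        ⟪rightSingularBasis M i, rightSingularBasis M j⟫_ℝ := by
  rw [← LinearMap.adjoint_inner_right, ← toEuclideanLin_conjTranspose_eq_adjoint,
    conjTranspose_eq_transpose_of_trivial, ← LinearMap.comp_apply, ← toLpLin_mul_same,
    toLpLin_apply, rightSingularBasis,
    (isHermitian_transpose_mul_self M).mulVec_eigenvectorBasis j, WithLp.toLp_smul,
    WithLp.toLp_ofLp, real_inner_smul_right]

lemma norm_toEuclideanLin_rightSingularBasis (M : Matrix (Fin m) (Fin n) ℝ) (i : Fin n) :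
    ‖toEuclideanLin M (rightSingularBasis M i)‖ = singVals M i := by
  rw [norm_eq_sqrt_real_inner, inner_toEuclideanLin_rightSingularBasis,
    real_inner_self_eq_norm_sq, (rightSingularBasis M).orthonormal.1 i, one_pow, mul_one]
  rfl

lemma pairwise_inner_toEuclideanLin_rightSingularBasis (M : Matrix (Fin m) (Fin n) ℝ) :
    Pairwise fun i j =>
      ⟪toEuclideanLin M (rightSingularBasis M i), toEuclideanLin M (rightSingularBasis M j)⟫_ℝ =
        0 := by
  intro i j hij
  rw [inner_toEuclideanLin_rightSingularBasis, (rightSingularBasis M).orthonormal.2 hij, mul_zero]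

lemma nucNorm_eq_sum_norm (M : Matrix (Fin m) (Fin n) ℝ) :
    nucNorm M = ∑ i, ‖toEuclideanLin M (rightSingularBasis M i)‖ := by
  simp_rw [norm_toEuclideanLin_rightSingularBasis, nucNorm]

lemma nucNorm_add_le (A B : Matrix (Fin m) (Fin n) ℝ) :
    nucNorm (A + B) ≤ nucNorm A + nucNorm B := by
  simp only [nucNorm_eq_sum_norm, map_add]
  exact sum_norm_add_le_of_pairwise_inner_eq_zero _ _ _
    (by simpa only [map_add] using pairwise_inner_toEuclideanLin_rightSingularBasis (A + B)) _ _

end SingularValues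

section FrobeniusRank

open Finset

variable {m n : ℕ}

lemma frobNorm_nonneg (M : Matrix (Fin m) (Fin n) ℝ) : 0 ≤ frobNorm M := Real.sqrt_nonneg _

lemma frobNorm_sq_eq_trace (M : Matrix (Fin m) (Fin n) ℝ) : frobNorm M ^ 2 = trace (Mᵀ * M) := by
  rw [frobNorm, Real.sq_sqrt (by positivity), trace, sum_comm]
  simp [mul_apply, sq]

lemma sum_singVals_sq (M : Matrix (Fin m) (Fin n) ℝ) :
    ∑ i, singVals M i ^ 2 = frobNorm M ^ 2 := by
  simp_rw [singVals_sq, frobNorm_sq_eq_trace,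
    (isHermitian_transpose_mul_self M).trace_eq_sum_eigenvalues]
  rfl

lemma card_singVals_ne_zero (M : Matrix (Fin m) (Fin n) ℝ) :
    #{i | singVals M i ≠ 0} = M.rank := by
  rw [← rank_transpose_mul_self, (isHermitian_transpose_mul_self M).rank_eq_card_non_zero_eigs,
    Fintype.card_subtype]
  exact congrArg card <| filter_congr fun i _ =>
    (Real.sqrt_eq_zero (eigenvalues_transpose_mul_self_nonneg M i)).not

lemma nucNorm_le_sqrt_rank_mul_frobNorm (M : Matrix (Fin m) (Fin n) ℝ) :
    nucNorm M ≤ Real.sqrt M.rank * frobNorm M := by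
  set s : Finset (Fin n) := {i | singVals M i ≠ 0}
  have hnuc : nucNorm M = ∑ i ∈ s, singVals M i := (sum_filter_ne_zero _).symm
  have hsq : ∑ i ∈ s, singVals M i ^ 2 ≤ frobNorm M ^ 2 := by
    rw [← sum_singVals_sq]
    exact sum_le_sum_of_subset_of_nonneg (subset_univ s) fun i _ _ => sq_nonneg _
  rw [hnuc, ← card_singVals_ne_zero, ← Real.sqrt_sq (frobNorm_nonneg M),
    ← Real.sqrt_mul (by positivity)]
  refine Real.le_sqrt_of_sq_le ?_
  calc (∑ i ∈ s, singVals M i) ^ 2 ≤ #s * ∑ i ∈ s, singVals M i ^ 2 := sq_sum_le_card_mul_sum_sq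
    _ ≤ #s * frobNorm M ^ 2 := by gcongr

end FrobeniusRank

section Projections

lemma isIdempotentElem_mul_transpose {R p q : Type*} [CommSemiring R] [Fintype p] [Fintype q]
    [DecidableEq q] {U : Matrix p q R} (hU : Uᵀ * U = 1) : IsIdempotentElem (U * Uᵀ) := by
  rw [IsIdempotentElem, Matrix.mul_assoc, ← Matrix.mul_assoc Uᵀ, hU, Matrix.one_mul]

lemma transpose_one_sub_mul_transpose {R p q : Type*} [CommRing R] [Fintype q] [DecidableEq p]
    (U : Matrix p q R) : (1 - U * Uᵀ)ᵀ = 1 - U * Uᵀ := by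
  rw [transpose_sub, transpose_one, transpose_mul, transpose_transpose]

variable {m n : ℕ}

lemma frobNorm_sub_mul_mul_le {P : Matrix (Fin m) (Fin m) ℝ} {K : Matrix (Fin n) (Fin n) ℝ}
    (hP : IsIdempotentElem P) (hPt : Pᵀ = P) (hK : IsIdempotentElem K) (hKt : Kᵀ = K)
    (A : Matrix (Fin m) (Fin n) ℝ) : frobNorm (A - P * A * K) ≤ frobNorm A := by
  set B := P * A * K
  set D := A - B
  have horth : trace (Bᵀ * D) = 0 := by
    set X := Aᵀ * P * A
    have hBD : Bᵀ * D = K * X - K * X * K := by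
      simp only [B, D, X, transpose_mul, hPt, hKt, Matrix.mul_sub, Matrix.mul_assoc]
      rw [← Matrix.mul_assoc P P, hP.eq]
    rw [hBD, trace_sub, trace_mul_comm (K * X) K, ← Matrix.mul_assoc K K X, hK.eq, sub_self]
  have hsplit : frobNorm A ^ 2 = frobNorm D ^ 2 + frobNorm B ^ 2 := by
    have hDB : trace (Dᵀ * B) = 0 := by
      rw [← trace_transpose, transpose_mul, transpose_transpose, horth]
    have hA : A = D + B := by simp [D]
    rw [frobNorm_sq_eq_trace, frobNorm_sq_eq_trace, frobNorm_sq_eq_trace, hA, transpose_add,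
      Matrix.add_mul, Matrix.mul_add, Matrix.mul_add, trace_add, trace_add, trace_add, horth, hDB]
    ring
  refine (pow_le_pow_iff_left₀ (frobNorm_nonneg _) (frobNorm_nonneg _) two_ne_zero).mp ?_
  rw [hsplit]
  exact le_add_of_nonneg_right (sq_nonneg _)

end Projections

section Cone

variable {d T r : ℕ}

lemma frobNorm_sub_projPerp_le {U : Matrix (Fin d) (Fin r) ℝ} {V : Matrix (Fin T) (Fin r) ℝ}
    (hU : Uᵀ * U = 1) (hV : Vᵀ * V = 1) (Δ : Matrix (Fin d) (Fin T) ℝ) :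
    frobNorm (Δ - projPerp U V Δ) ≤ frobNorm Δ :=
  frobNorm_sub_mul_mul_le (isIdempotentElem_mul_transpose hU).one_sub
    (transpose_one_sub_mul_transpose U) (isIdempotentElem_mul_transpose hV).one_sub
    (transpose_one_sub_mul_transpose V) Δ

lemma rank_sub_projPerp_le (U : Matrix (Fin d) (Fin r) ℝ) (V : Matrix (Fin T) (Fin r) ℝ)
    (Δ : Matrix (Fin d) (Fin T) ℝ) : (Δ - projPerp U V Δ).rank ≤ 2 * r := by
  have hfactor : Δ - projPerp U V Δ =
      fromCols U ((1 - U * Uᵀ) * Δ * V) * fromRows (Uᵀ * Δ) Vᵀ := by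
    simp only [fromCols_mul_fromRows, projPerp, Matrix.sub_mul, Matrix.mul_sub, Matrix.one_mul,
      Matrix.mul_one, Matrix.mul_assoc]
    abel
  calc (Δ - projPerp U V Δ).rank ≤ Fintype.card (Fin r ⊕ Fin r) :=
        hfactor ▸ (rank_mul_le_left _ _).trans (rank_le_card_width _)
    _ = 2 * r := by simp [two_mul]

lemma nucNorm_le_four_mul_of_mem_coneC {U : Matrix (Fin d) (Fin r) ℝ}
    {V : Matrix (Fin T) (Fin r) ℝ} {Δ : Matrix (Fin d) (Fin T) ℝ} (hΔ : Δ ∈ coneC U V) :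
    nucNorm Δ ≤ 4 * nucNorm (Δ - projPerp U V Δ) := by
  have := nucNorm_add_le (projPerp U V Δ) (Δ - projPerp U V Δ)
  rw [add_sub_cancel] at this
  linarith [hΔ.out]

end Cone

lemma natCast_sub_mul_sort_le_sum {n : ℕ} {f : Fin n → ℝ} (hf : 0 ≤ f) (k : Fin n) :
    ((n - k : ℕ) : ℝ) * f (Tuple.sort f k) ≤ ∑ i, f i := by
  calc ((n - k : ℕ) : ℝ) * f (Tuple.sort f k) = ∑ _i ∈ Finset.Ici k, f (Tuple.sort f k) := by
        simp [Fin.card_Ici]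
    _ ≤ ∑ i ∈ Finset.Ici k, f (Tuple.sort f i) :=
        Finset.sum_le_sum fun i hi => Tuple.monotone_sort f (Finset.mem_Ici.mp hi)
    _ ≤ ∑ i, f (Tuple.sort f i) :=
        Finset.sum_le_sum_of_subset_of_nonneg (Finset.subset_univ _) fun i _ _ => hf _
    _ = ∑ i, f i := Equiv.sum_comp _ f

lemma natCast_mul_svDesc_le_nucNorm {m n : ℕ} (A : Matrix (Fin m) (Fin n) ℝ) (j : ℕ) :
    (j : ℝ) * svDesc A j ≤ nucNorm A := by
  have hσ : 0 ≤ singVals A := fun i => Real.sqrt_nonneg _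
  unfold svDesc
  split_ifs with hj
  · simpa [nucNorm, Nat.sub_sub_self hj.2] using
      natCast_sub_mul_sort_le_sum hσ ⟨n - j, by omega⟩
  · simpa [nucNorm] using Finset.sum_nonneg fun i _ => hσ i

theorem stmt6_general {d T r : ℕ}
    (U : Matrix (Fin d) (Fin r) ℝ) (V : Matrix (Fin T) (Fin r) ℝ)
    (hU : Uᵀ * U = 1) (hV : Vᵀ * V = 1)
    (Δ : Matrix (Fin d) (Fin T) ℝ) (hΔ : Δ ∈ coneC U V)
    (j : ℕ) (hj : 1 ≤ j) :
    svDesc Δ j ≤ 4 * Real.sqrt (2 * r) * frobNorm Δ / j := by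
  rw [le_div_iff₀ (by exact_mod_cast hj), mul_comm]
  calc (j : ℝ) * svDesc Δ j ≤ nucNorm Δ := natCast_mul_svDesc_le_nucNorm Δ j
    _ ≤ 4 * nucNorm (Δ - projPerp U V Δ) := nucNorm_le_four_mul_of_mem_coneC hΔ
    _ ≤ 4 * (Real.sqrt (Δ - projPerp U V Δ).rank * frobNorm (Δ - projPerp U V Δ)) := by
        gcongr; exact nucNorm_le_sqrt_rank_mul_frobNorm _
    _ ≤ 4 * (Real.sqrt (2 * r) * frobNorm Δ) := by
        have hrank : ((Δ - projPerp U V Δ).rank : ℝ) ≤ 2 * r := by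
          exact_mod_cast rank_sub_projPerp_le U V Δ
        gcongr
        · exact frobNorm_nonneg _
        · exact frobNorm_sub_projPerp_le hU hV Δ
    _ = 4 * Real.sqrt (2 * r) * frobNorm Δ := by ring

/-- for `Δ ∈ C(r)` and `j ≥ 1`, the `j`-th largest singular value of `Δ`
satisfies `σ_j(Δ) ≤ 4 √(2r) ‖Δ‖_F / j`. -/
theorem stmt6 {d T r : ℕ} (hd : 0 < d) (hT : 0 < T) (hr : 0 < r)
    (hrd : r ≤ d) (hrT : r ≤ T)
    (W : Matrix (Fin d) (Fin T) ℝ) (hrank : W.rank = r)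
    (U : Matrix (Fin d) (Fin r) ℝ) (V : Matrix (Fin T) (Fin r) ℝ) (Dv : Fin r → ℝ)
    (hU : Uᵀ * U = 1) (hV : Vᵀ * V = 1) (hDv : ∀ i, 0 < Dv i)
    (hW : W = U * Matrix.diagonal Dv * Vᵀ)
    (Δ : Matrix (Fin d) (Fin T) ℝ) (hΔ : Δ ∈ coneC U V)
    (j : ℕ) (hj : 1 ≤ j) :
    svDesc Δ j ≤ 4 * Real.sqrt (2 * r) * frobNorm Δ / j :=
  stmt6_general U V hU hV Δ hΔ j hj
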